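/- Let R be a finite non-commutative ring of odd order n with Z(R) = {0}. Then γ(Γ(R)) = (n-1)/2 if and only if Γ(R) is a disjoint union of (n-1)/2 copies of P₂ (every vertex has degree exactly 1); moreover, in that case n = 3^k for some integer k > 1. -/

import Mathlib

open scoped Classical

noncomputable section

/-- The commuting graph of a (non-unital, possibly non-commutative) ring `R`:
vertices are the non-central elements, and two distinct vertices are adjacent
iff they commute. -/
def commutingGraph (R : Type*) [NonUnitalRing R] :
    SimpleGraph {x : R // x ∉ Set.center R} where
  Adj a b := a ≠ b ∧ (a : R) * b = (b : R) * a
  symm := by constructor; rintro a b ⟨h1, h2⟩; exact ⟨h1.symm, h2.symm⟩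
  loopless := by constructor; rintro a ⟨h, -⟩; exact h rfl

/-- A dominating set: every vertex not in `D` is adjacent to some vertex of `D`. -/
def SimpleGraph.IsDominatingSet {V : Type*} (G : SimpleGraph V) (D : Finset V) : Prop :=
  ∀ v, v ∉ D → ∃ u ∈ D, G.Adj u v

/-- The domination number: the minimum cardinality of a dominating set. -/
noncomputable def SimpleGraph.dominationNumber {V : Type*} [Fintype V] (G : SimpleGraph V) : ℕ :=
  sInf {n | ∃ D : Finset V, G.IsDominatingSet D ∧ D.card = n}

/-- The signed domination number: the minimum total weight of a function
`f : V → {-1, 1}` whose sum over every closed neighbourhood is at least `1`. -/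
noncomputable def SimpleGraph.signedDominationNumber {V : Type*} [Fintype V]
    (G : SimpleGraph V) : ℤ :=
  sInf {w : ℤ | ∃ f : V → ℤ, (∀ v, f v = 1 ∨ f v = -1) ∧
    (∀ v : V, 1 ≤ ∑ u ∈ Finset.univ.filter (fun u => G.Adj v u ∨ u = v), f u) ∧
    w = ∑ v, f v}

/-- Underlying type of the ring `E`. -/
def Ering : Type := ZMod 2 × ZMod 2

instance : Fintype Ering := inferInstanceAs (Fintype (ZMod 2 × ZMod 2))
instance : DecidableEq Ering := inferInstanceAs (DecidableEq (ZMod 2 × ZMod 2))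
instance : AddCommGroup Ering := inferInstanceAs (AddCommGroup (ZMod 2 × ZMod 2))
instance : Mul Ering := ⟨fun a b => (b.1 * a.1, b.1 * a.2)⟩

/-- `E = ⟨x,y : 2x=2y=0, x²=x, y²=y, xy=x, yx=y⟩`, realized on `ZMod 2 × ZMod 2`
with `x = (1,0)`, `y = (1,1)` and multiplication `a * b = (b₁a₁, b₁a₂)`. -/
instance : NonUnitalRing Ering :=
  { (inferInstanceAs (AddCommGroup Ering) : AddCommGroup Ering), (inferInstanceAs (Mul Ering) : Mul Ering) with
    left_distrib := by decide
    right_distrib := by decide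
    zero_mul := by decide
    mul_zero := by decide
    mul_assoc := by decide }

/-- Underlying type of the ring `F`. -/
def Fring : Type := ZMod 2 × ZMod 2

instance : Fintype Fring := inferInstanceAs (Fintype (ZMod 2 × ZMod 2))
instance : DecidableEq Fring := inferInstanceAs (DecidableEq (ZMod 2 × ZMod 2))
instance : AddCommGroup Fring := inferInstanceAs (AddCommGroup (ZMod 2 × ZMod 2))
instance : Mul Fring := ⟨fun a b => (a.1 * b.1, a.1 * b.2)⟩

/-- `F = ⟨x,y : 2x=2y=0, x²=x, y²=y, xy=y, yx=x⟩`, realized on `ZMod 2 × ZMod 2`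
with `x = (1,0)`, `y = (1,1)` and multiplication `a * b = (a₁b₁, a₁b₂)`. -/
instance : NonUnitalRing Fring :=
  { (inferInstanceAs (AddCommGroup Fring) : AddCommGroup Fring), (inferInstanceAs (Mul Fring) : Mul Fring) with
    left_distrib := by decide
    right_distrib := by decide
    zero_mul := by decide
    mul_zero := by decide
    mul_assoc := by decide }

/-!
Negation is an involution of `Γ(R)` without fixed points (the order is odd) that pairs every
vertex `x` with the neighbour `-x` and respects adjacency: if `x ~ y` then `x ~ -y`. A set meeting
each pair `{x, -x}` once is therefore dominating, so `γ ≤ (n - 1) / 2`. If the pairs are the only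
edges, each vertex dominates just itself and its partner, which forces equality. If some `x` has a
further neighbour `y ≠ -x`, then `x` dominates all of `±x, ±y` and one vertex can be saved.
In the matching case `2x` commutes with `x`, so it must be the partner `-x`: every element has
additive order dividing `3` and `n = 3 ^ k`. Finally `k ≥ 2`, because a ring whose additive group
is cyclic is commutative.
-/

theorem eq_zero_of_add_self_eq_zero_of_odd_card {G : Type*} [AddGroup G] [Fintype G]
    (hG : Odd (Fintype.card G)) {x : G} (h : x + x = 0) : x = 0 := by
  have h2 : addOrderOf x ∣ 2 := addOrderOf_dvd_of_nsmul_eq_zero (by rwa [two_nsmul])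
  rcases (Nat.dvd_prime Nat.prime_two).1 h2 with h1 | h1
  · exact AddMonoid.addOrderOf_eq_one_iff.mp h1
  · have := h1 ▸ (addOrderOf_dvd_card (x := x))
    exact absurd (even_iff_two_dvd.2 this) (Nat.not_even_iff_odd.2 hG)

theorem exists_card_eq_prime_pow_of_nsmul_eq_zero {G : Type*} [AddGroup G] [Fintype G] {p : ℕ}
    (hp : p.Prime) (h : ∀ x : G, p • x = 0) : ∃ k, Fintype.card G = p ^ k := by
  refine ⟨_, Nat.eq_prime_pow_of_unique_prime_dvd Fintype.card_ne_zero fun {q} hq hqG => ?_⟩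
  have : Fact q.Prime := ⟨hq⟩
  obtain ⟨x, hx⟩ := exists_prime_addOrderOf_dvd_card q hqG
  exact (Nat.prime_dvd_prime_iff_eq hq hp).1 (hx ▸ addOrderOf_dvd_of_nsmul_eq_zero (h x))

theorem mul_comm_of_isAddCyclic {R : Type*} [NonUnitalNonAssocRing R] [IsAddCyclic R] (x y : R) :
    x * y = y * x := by
  obtain ⟨g, hg⟩ := IsAddCyclic.exists_generator (α := R)
  obtain ⟨a, rfl⟩ := AddSubgroup.mem_zmultiples_iff.1 (hg x)
  obtain ⟨b, rfl⟩ := AddSubgroup.mem_zmultiples_iff.1 (hg y)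
  simp only [smul_mul_assoc, mul_smul_comm, smul_smul, mul_comm a b]

theorem one_lt_of_card_eq_three_pow {R : Type*} [NonUnitalNonAssocRing R] [Fintype R]
    (hnc : ∃ x y : R, x * y ≠ y * x) {k : ℕ} (hk : Fintype.card R = 3 ^ k) : 1 < k := by
  by_contra! hk1
  have : Fact (Nat.Prime 3) := ⟨Nat.prime_three⟩
  have : IsAddCyclic R := isAddCyclic_of_card_dvd_prime (p := 3) <| by
    rw [Nat.card_eq_fintype_card, hk]; simpa using pow_dvd_pow 3 hk1
  obtain ⟨x, y, hxy⟩ := hnc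
  exact hxy (mul_comm_of_isAddCyclic x y)

section Transversal

variable {V : Type*} {ν : V → V}

def IsTransversal (ν : V → V) (S : Finset V) : Prop :=
  ∀ v, v ∈ S ↔ ν v ∉ S

theorem IsTransversal.two_mul_card [Fintype V] (hν : Function.Involutive ν) {S : Finset V}
    (hS : IsTransversal ν S) : 2 * S.card = Fintype.card V := by
  have hcompl : Sᶜ = S.image ν := by
    ext v
    simp only [Finset.mem_compl, Finset.mem_image]
    constructor
    · intro hv
      exact ⟨ν v, (hS (ν v)).2 (by rwa [hν v]), hν v⟩
    · rintro ⟨u, hu, rfl⟩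
      exact (hS u).1 hu
  rw [two_mul, ← Finset.card_add_card_compl S, hcompl,
    Finset.card_image_of_injective S hν.injective]

theorem exists_isTransversal_superset [Fintype V] (hν : Function.Involutive ν)
    (hfix : ∀ v, ν v ≠ v) {T : Finset V} (hT : ∀ v ∈ T, ν v ∉ T) :
    ∃ S, IsTransversal ν S ∧ T ⊆ S := by
  let e := Fintype.equivFin V
  -- off `T ∪ ν T`, keep the member of each pair `{v, ν v}` that `e` enumerates first
  refine ⟨Finset.univ.filter fun v => v ∈ T ∨ (ν v ∉ T ∧ e v < e (ν v)), fun v => ?_,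
    fun v hv => by simp [hv]⟩
  have hne : e v ≠ e (ν v) := fun h => hfix v (e.injective h).symm
  have hv := hT v
  have hνv := hT (ν v)
  simp only [Finset.mem_filter, Finset.mem_univ, true_and, hν v] at hνv ⊢
  grind

theorem IsTransversal.isDominatingSet {G : SimpleGraph V} (hν : Function.Involutive ν)
    (hadj : ∀ v, G.Adj v (ν v)) {S : Finset V} (hS : IsTransversal ν S) : G.IsDominatingSet S :=
  fun v hv => ⟨ν v, (hS (ν v)).2 (by rwa [hν v]), by simpa only [hν v] using hadj (ν v)⟩

end Transversal

namespace SimpleGraph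

variable {V : Type*} [Fintype V] (G : SimpleGraph V)

theorem dominationNumber_le_card {D : Finset V} (hD : G.IsDominatingSet D) :
    G.dominationNumber ≤ D.card :=
  Nat.sInf_le ⟨D, hD, rfl⟩

theorem exists_isDominatingSet_card_eq_dominationNumber :
    ∃ D : Finset V, G.IsDominatingSet D ∧ D.card = G.dominationNumber :=
  Nat.sInf_mem (s := {n | ∃ D : Finset V, G.IsDominatingSet D ∧ D.card = n})
    ⟨_, Finset.univ, fun v hv => absurd (Finset.mem_univ v) hv, rfl⟩

theorem card_le_mul_card_of_isDominatingSet {d : ℕ} (hd : ∀ v, G.degree v ≤ d) {D : Finset V}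
    (hD : G.IsDominatingSet D) : Fintype.card V ≤ (d + 1) * D.card := by
  have hcover : Finset.univ ⊆ D.biUnion fun u => insert u (G.neighborFinset u) := by
    intro v _
    by_cases hv : v ∈ D
    · exact Finset.mem_biUnion.2 ⟨v, hv, Finset.mem_insert_self _ _⟩
    · obtain ⟨u, hu, huv⟩ := hD v hv
      exact Finset.mem_biUnion.2
        ⟨u, hu, Finset.mem_insert_of_mem ((G.mem_neighborFinset u v).2 huv)⟩
  calc Fintype.card V = Finset.univ.card := Finset.card_univ.symm
    _ ≤ ∑ u ∈ D, (insert u (G.neighborFinset u)).card :=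
      (Finset.card_le_card hcover).trans Finset.card_biUnion_le
    _ ≤ ∑ _u ∈ D, (d + 1) := Finset.sum_le_sum fun u _ =>
      (Finset.card_insert_le _ _).trans <| by
        rw [card_neighborFinset_eq_degree]; exact Nat.succ_le_succ (hd u)
    _ = (d + 1) * D.card := by rw [Finset.sum_const, smul_eq_mul, mul_comm]

theorem card_le_two_mul_dominationNumber (hdeg : ∀ v, G.degree v ≤ 1) :
    Fintype.card V ≤ 2 * G.dominationNumber := by
  obtain ⟨D, hD, hcard⟩ := G.exists_isDominatingSet_card_eq_dominationNumber
  exact hcard ▸ G.card_le_mul_card_of_isDominatingSet hdeg hD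

variable {ν : V → V}

theorem two_mul_dominationNumber_le_card (hν : Function.Involutive ν)
    (hadj : ∀ v, G.Adj v (ν v)) : 2 * G.dominationNumber ≤ Fintype.card V := by
  obtain ⟨S, hS, -⟩ :=
    exists_isTransversal_superset hν (fun v => (hadj v).ne') (T := ∅) (by simp)
  exact hS.two_mul_card hν ▸
    Nat.mul_le_mul_left 2 (G.dominationNumber_le_card (hS.isDominatingSet hν hadj))

/-- A vertex `v` with a neighbour `w` outside its pair dominates both `w` and `ν w`, so a
transversal through `v` and `w` stays dominating after removing `w`. -/
theorem two_mul_dominationNumber_lt_card (hν : Function.Involutive ν)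
    (hadj : ∀ v, G.Adj v (ν v)) (hcompat : ∀ u w, G.Adj u w → u ≠ ν w → G.Adj u (ν w))
    {v w : V} (hvw : G.Adj v w) (hw : w ≠ ν v) : 2 * G.dominationNumber < Fintype.card V := by
  have hvνw : v ≠ ν w := fun h => hw (by rw [h, hν w])
  obtain ⟨S, hS, hT⟩ := exists_isTransversal_superset hν (fun v => (hadj v).ne') (T := {v, w})
    (by
      simp only [Finset.mem_insert, Finset.mem_singleton]
      rintro u (rfl | rfl)
      · exact not_or.2 ⟨(hadj _).ne', hw.symm⟩
      · exact not_or.2 ⟨hvνw.symm, (hadj _).ne'⟩)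
  have hwS : w ∈ S := hT (by simp)
  have hD : G.IsDominatingSet (S.erase w) := by
    intro u hu
    have hvD : v ∈ S.erase w := Finset.mem_erase.2 ⟨hvw.ne, hT (by simp)⟩
    by_cases huw : u = w
    · exact ⟨v, hvD, huw ▸ hvw⟩
    by_cases huνw : u = ν w
    · exact ⟨v, hvD, huνw ▸ hcompat v w hvw hvνw⟩
    have huS : u ∉ S := fun h => hu (Finset.mem_erase.2 ⟨huw, h⟩)
    refine ⟨ν u, Finset.mem_erase.2 ⟨fun h => huνw (by rw [← h, hν u]), ?_⟩, ?_⟩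
    · exact (hS (ν u)).2 (by rwa [hν u])
    · simpa only [hν u] using hadj (ν u)
  have := G.dominationNumber_le_card hD
  have := hS.two_mul_card hν
  have := Finset.card_erase_of_mem hwS
  have := Finset.card_pos.2 ⟨w, hwS⟩
  omega

theorem two_mul_dominationNumber_eq_card_iff (hν : Function.Involutive ν)
    (hadj : ∀ v, G.Adj v (ν v))
    (hcompat : ∀ u w, G.Adj u w → u ≠ ν w → G.Adj u (ν w)) :
    2 * G.dominationNumber = Fintype.card V ↔ ∀ v, G.degree v = 1 := by
  constructor
  · intro h v
    by_contra hv
    obtain ⟨w, hvw, hw⟩ : ∃ w, G.Adj v w ∧ w ≠ ν v := by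
      by_contra! hw
      exact hv (degree_eq_one_iff_existsUnique_adj.2 ⟨ν v, hadj v, hw⟩)
    exact (G.two_mul_dominationNumber_lt_card hν hadj hcompat hvw hw).ne h
  · intro hdeg
    exact le_antisymm (G.two_mul_dominationNumber_le_card hν hadj)
      (G.card_le_two_mul_dominationNumber fun v => (hdeg v).le)

end SimpleGraph

theorem card_nonCentral_eq_card_sub_one {R : Type*} [NonUnitalRing R] [Fintype R]
    (hz : Set.center R = {0}) :
    Fintype.card {x : R // x ∉ Set.center R} = Fintype.card R - 1 := by
  simp only [hz, Set.mem_singleton_iff]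
  rw [Fintype.card_subtype_compl, Fintype.card_subtype_eq]

namespace commutingGraph

variable {R : Type*} [NonUnitalRing R]

def negVertex (v : {x : R // x ∉ Set.center R}) : {x : R // x ∉ Set.center R} :=
  ⟨-v, fun h => v.2 (neg_neg (v : R) ▸ Set.neg_mem_center h)⟩

theorem negVertex_involutive : Function.Involutive (negVertex (R := R)) :=
  fun _ => Subtype.ext (neg_neg _)

theorem adj_negVertex_of_adj {u w : {x : R // x ∉ Set.center R}}
    (h : (commutingGraph R).Adj u w) (hne : u ≠ negVertex w) :
    (commutingGraph R).Adj u (negVertex w) :=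
  ⟨hne, by simp only [negVertex, mul_neg, neg_mul, h.2]⟩

variable [Fintype R]

theorem negVertex_ne (hR : Odd (Fintype.card R)) (v : {x : R // x ∉ Set.center R}) :
    negVertex v ≠ v := by
  intro h
  have hv : (v : R) + v = 0 := by
    nth_rewrite 1 [← congrArg Subtype.val h]
    exact neg_add_cancel _
  exact v.2 (eq_zero_of_add_self_eq_zero_of_odd_card hR hv ▸ Set.zero_mem_center)

theorem adj_negVertex (hR : Odd (Fintype.card R)) (v : {x : R // x ∉ Set.center R}) :
    (commutingGraph R).Adj v (negVertex v) :=
  ⟨(negVertex_ne hR v).symm, by simp only [negVertex, mul_neg, neg_mul]⟩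

theorem two_mul_dominationNumber_eq_card_iff (hR : Odd (Fintype.card R)) :
    2 * (commutingGraph R).dominationNumber = Fintype.card {x : R // x ∉ Set.center R} ↔
      ∀ v, (commutingGraph R).degree v = 1 :=
  (commutingGraph R).two_mul_dominationNumber_eq_card_iff negVertex_involutive
    (adj_negVertex hR) fun _ _ => adj_negVertex_of_adj

theorem three_nsmul_eq_zero (hR : Odd (Fintype.card R)) (hz : Set.center R = {0})
    (hdeg : ∀ v, (commutingGraph R).degree v = 1) (x : R) : 3 • x = 0 := by
  by_cases hx : x = 0
  · rw [hx, smul_zero]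
  have hxx : x + x ≠ 0 := fun h => hx (eq_zero_of_add_self_eq_zero_of_odd_card hR h)
  let v : {x : R // x ∉ Set.center R} := ⟨x, by rwa [hz]⟩
  let u : {x : R // x ∉ Set.center R} := ⟨x + x, by rwa [hz]⟩
  have hvu : (commutingGraph R).Adj v u :=
    ⟨fun h => hx (add_eq_right.1 (congrArg Subtype.val h).symm),
      by simp only [v, u, mul_add, add_mul]⟩
  obtain ⟨_, -, huniq⟩ := SimpleGraph.degree_eq_one_iff_existsUnique_adj.1 (hdeg v)
  have hneg : x + x = -x :=
    congrArg Subtype.val ((huniq u hvu).trans (huniq _ (adj_negVertex hR v)).symm)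
  rw [succ_nsmul, two_nsmul, hneg, neg_add_cancel]

end commutingGraph

/-- For odd `n`, `γ(Γ(R)) = (n-1)/2` iff `Γ(R)` is a disjoint union of `(n-1)/2`
copies of `P₂` (every vertex has degree exactly `1`); moreover in that case
`n = 3^k` for some `k > 1`. -/
theorem stmt_8 (R : Type*) [NonUnitalRing R] [Fintype R] (n : ℕ)
    (hcard : Fintype.card R = n) (hn : Odd n)
    (hnc : ∃ x y : R, x * y ≠ y * x)
    (hz : Set.center R = {0}) :
    ((commutingGraph R).dominationNumber = (n - 1) / 2 ↔
      ∀ v, (commutingGraph R).degree v = 1) ∧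
    ((commutingGraph R).dominationNumber = (n - 1) / 2 → ∃ k : ℕ, 1 < k ∧ n = 3 ^ k) := by
  subst hcard
  have hγ : (commutingGraph R).dominationNumber = (Fintype.card R - 1) / 2 ↔
      ∀ v, (commutingGraph R).degree v = 1 := by
    rw [← commutingGraph.two_mul_dominationNumber_eq_card_iff hn,
      card_nonCentral_eq_card_sub_one hz]
    obtain ⟨m, hm⟩ := hn
    omega
  refine ⟨hγ, fun h => ?_⟩
  obtain ⟨k, hk⟩ := exists_card_eq_prime_pow_of_nsmul_eq_zero Nat.prime_three
    (commutingGraph.three_nsmul_eq_zero hn hz (hγ.1 h))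
  exact ⟨k, one_lt_of_card_eq_three_pow hnc hk, hk⟩

end
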